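/- Let L be an N×N complex matrix and ρ a density matrix on ℂ^N. Set c_α := Re tr((L† + αI)(L + αI)ρ) for α ∈ ℝ. Then c_α/α² → 1 as α → +∞ (in particular c_α > 0 for all sufficiently large α), and with Υ_α(ρ) := (L + αI)ρ(L† + αI)/c_α − ρ (defined for α large enough that c_α > 0), one has, entrywise, lim_{α→+∞} α·Υ_α(ρ) = Λ(ρ) and lim_{α→+∞} α·Υ_{−α}(ρ) = −Λ(ρ), where Λ(ρ) := Lρ + ρL† − Re tr((L + L†)ρ)·ρ. (The diffusive scaling limit underlying the diffusion approximation of the Poisson-driven stochastic master equation.) -/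

import Mathlib

open Matrix Finset ComplexOrder

/-- The positive semidefinite square root of a matrix (junk value `0` if the matrix is not
positive semidefinite). -/
noncomputable def matSqrt {N : ℕ} (A : Matrix (Fin N) (Fin N) ℂ) : Matrix (Fin N) (Fin N) ℂ :=
  open scoped Classical in
  if h : A.PosSemidef then
    (h.1.eigenvectorUnitary : Matrix (Fin N) (Fin N) ℂ) *
      diagonal ((↑) ∘ (Real.sqrt ·) ∘ h.1.eigenvalues) *
      (star h.1.eigenvectorUnitary : Matrix (Fin N) (Fin N) ℂ) else 0

/-- The fidelity `F(ρ,σ) = Re tr √(√ρ σ √ρ)`. -/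
noncomputable def fid {N : ℕ} (ρ σ : Matrix (Fin N) (Fin N) ℂ) : ℝ :=
  ((matSqrt (matSqrt ρ * σ * matSqrt ρ)).trace).re

/-- A density matrix: Hermitian, positive semidefinite, trace one. -/
def IsDensity {N : ℕ} (ρ : Matrix (Fin N) (Fin N) ℂ) : Prop :=
  ρ.IsHermitian ∧ ρ.PosSemidef ∧ ρ.trace = 1

/-!
Both ingredients of `Υ_α` are quadratic in `α`: with `a = Re tr(L†Lρ)`, `b = Re tr((L + L†)ρ)`
and `B = Lρ + ρL†`, one has `c_α = α² + bα + a` (as `tr ρ = 1`) and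
`(L + α)ρ(L† + α) = LρL† + αB + α²ρ`. Hence, for large `α`,
`α Υ_α = (α² / c_α) (α⁻¹ LρL† + B - (b + a/α) ρ) → B - bρ = Λ`,
and `Υ_{-α}` is the same expression with `(B, b)` replaced by `(-B, -b)`.
-/

open Filter Topology

theorem tendsto_quadratic_div_sq (a b : ℝ) :
    Tendsto (fun α : ℝ => (α ^ 2 + b * α + a) / α ^ 2) atTop (𝓝 1) := by
  have h : Tendsto (fun α : ℝ => 1 + b * α⁻¹ + a * α⁻¹ ^ 2) atTop (𝓝 (1 + b * 0 + a * 0 ^ 2)) :=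
    (tendsto_const_nhds.add (tendsto_inv_atTop_zero.const_mul b)).add
      ((tendsto_inv_atTop_zero.pow 2).const_mul a)
  rw [show (1 + b * 0 + a * 0 ^ 2 : ℝ) = 1 by ring] at h
  refine h.congr' ?_
  filter_upwards [eventually_ne_atTop 0] with α hα
  field_simp

theorem eventually_quadratic_pos (a b : ℝ) : ∀ᶠ α : ℝ in atTop, 0 < α ^ 2 + b * α + a := by
  filter_upwards [(tendsto_quadratic_div_sq a b).eventually (lt_mem_nhds one_pos),
    eventually_ne_atTop 0] with α hdiv hα
  exact (div_pos_iff_of_pos_right (by positivity)).mp hdiv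

section ScalingLimit

variable {E : Type*} [AddCommGroup E] [Module ℝ E]

theorem smul_inv_quadratic_smul_sub_eq (a b : ℝ) (A B ρ : E) {α : ℝ} (hα : α ≠ 0)
    (hq : α ^ 2 + b * α + a ≠ 0) :
    α • ((α ^ 2 + b * α + a)⁻¹ • (A + α • B + α ^ 2 • ρ) - ρ)
      = (α ^ 2 / (α ^ 2 + b * α + a)) • (α⁻¹ • A + B - (b + a * α⁻¹) • ρ) := by
  set q := α ^ 2 + b * α + a with hq_def
  match_scalars <;> field_simp
  linear_combination hq_def

variable [TopologicalSpace E] [IsTopologicalAddGroup E] [ContinuousSMul ℝ E]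

theorem tendsto_smul_inv_quadratic_smul_sub (a b : ℝ) (A B ρ : E) :
    Tendsto (fun α : ℝ => α • ((α ^ 2 + b * α + a)⁻¹ • (A + α • B + α ^ 2 • ρ) - ρ))
      atTop (𝓝 (B - b • ρ)) := by
  have hratio : Tendsto (fun α : ℝ => α ^ 2 / (α ^ 2 + b * α + a)) atTop (𝓝 1) := by
    simpa using (tendsto_quadratic_div_sq a b).inv₀ one_ne_zero
  have hbracket : Tendsto (fun α : ℝ => α⁻¹ • A + B - (b + a * α⁻¹) • ρ) atTop
      (𝓝 ((0 : ℝ) • A + B - (b + a * 0) • ρ)) :=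
    ((tendsto_inv_atTop_zero.smul_const A).add_const B).sub
      ((tendsto_const_nhds.add (tendsto_inv_atTop_zero.const_mul a)).smul_const ρ)
  have hlim := hratio.smul hbracket
  rw [one_smul, zero_smul, zero_add, mul_zero, add_zero] at hlim
  refine hlim.congr' ?_
  filter_upwards [eventually_quadratic_pos a b, eventually_ne_atTop 0] with α hq hα
  exact (smul_inv_quadratic_smul_sub_eq a b A B ρ hα hq.ne').symm

end ScalingLimit

theorem add_smul_one_mul_add_smul_one {R A : Type*} [CommSemiring R] [Semiring A] [Algebra R A]
    (x y : A) (t : R) : (x + t • 1) * (y + t • 1) = x * y + t • (x + y) + t ^ 2 • 1 := by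
  simp only [add_mul, mul_add, smul_mul_assoc, mul_smul_comm, one_mul, mul_one, smul_add,
    smul_smul, pow_two]
  abel

theorem add_smul_one_mul_mul_add_smul_one {R A : Type*} [CommSemiring R] [Semiring A]
    [Algebra R A] (x y z : A) (t : R) :
    (x + t • 1) * y * (z + t • 1) = x * y * z + t • (x * y + y * z) + t ^ 2 • y := by
  simp only [add_mul, mul_add, smul_mul_assoc, mul_smul_comm, one_mul, mul_one, smul_add,
    smul_smul, pow_two]
  abel

theorem re_trace_add_smul_one_mul_add_smul_one_mul {n : Type*} [Fintype n] [DecidableEq n]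
    (K L ρ : Matrix n n ℂ) (hρ : ρ.trace = 1) (α : ℝ) :
    (((K + (α : ℂ) • 1) * (L + (α : ℂ) • 1) * ρ).trace).re
      = α ^ 2 + (((L + K) * ρ).trace).re * α + ((K * L * ρ).trace).re := by
  rw [Complex.coe_smul, add_smul_one_mul_add_smul_one]
  simp only [add_mul, smul_mul_assoc, one_mul, trace_add, trace_smul, hρ, Complex.add_re,
    Complex.smul_re, Complex.one_re, add_comm K L]
  ring

theorem diffusive_scaling_limit
    (N : ℕ) (L ρ : Matrix (Fin N) (Fin N) ℂ) (hρ : IsDensity ρ)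
    (c : ℝ → ℝ)
    (hc : ∀ α, c α = (((Lᴴ + (α : ℂ) • 1) * (L + (α : ℂ) • 1) * ρ).trace).re)
    (Υ : ℝ → Matrix (Fin N) (Fin N) ℂ)
    (hΥ : ∀ α, Υ α = ((c α : ℂ))⁻¹ • ((L + (α : ℂ) • 1) * ρ * (Lᴴ + (α : ℂ) • 1)) - ρ)
    (Λ : Matrix (Fin N) (Fin N) ℂ)
    (hΛ : Λ = L * ρ + ρ * Lᴴ - ((((L + Lᴴ) * ρ).trace).re : ℂ) • ρ) :
    Filter.Tendsto (fun α : ℝ => c α / α ^ 2) Filter.atTop (nhds 1) ∧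
    (∀ᶠ α : ℝ in Filter.atTop, 0 < c α) ∧
    Filter.Tendsto (fun α : ℝ => (α : ℂ) • Υ α) Filter.atTop (nhds Λ) ∧
    Filter.Tendsto (fun α : ℝ => (α : ℂ) • Υ (-α)) Filter.atTop (nhds (-Λ)) := by
  set a := ((Lᴴ * L * ρ).trace).re
  set b := (((L + Lᴴ) * ρ).trace).re
  set B := L * ρ + ρ * Lᴴ
  have hcq (α : ℝ) : c α = α ^ 2 + b * α + a :=
    (hc α).trans (re_trace_add_smul_one_mul_add_smul_one_mul _ _ _ hρ.2.2 α)
  have hΥq (α : ℝ) : Υ α = (α ^ 2 + b * α + a)⁻¹ • (L * ρ * Lᴴ + α • B + α ^ 2 • ρ) - ρ := by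
    rw [hΥ, hcq, ← Complex.ofReal_inv, Complex.coe_smul, Complex.coe_smul,
      add_smul_one_mul_mul_add_smul_one]
  have hΛB : Λ = B - b • ρ := by rw [hΛ, Complex.coe_smul]
  simp only [Complex.coe_smul, hcq]
  refine ⟨tendsto_quadratic_div_sq a b, eventually_quadratic_pos a b, ?_, ?_⟩
  · simpa only [hΥq, hΛB] using tendsto_smul_inv_quadratic_smul_sub a b (L * ρ * Lᴴ) B ρ
  · have hΥneg (α : ℝ) :
        Υ (-α) = (α ^ 2 + -b * α + a)⁻¹ • (L * ρ * Lᴴ + α • -B + α ^ 2 • ρ) - ρ := by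
      rw [hΥq, neg_sq, smul_neg, neg_smul, neg_mul, mul_neg]
    simpa only [hΥneg, hΛB, neg_smul, sub_neg_eq_add, neg_sub', neg_neg]
      using tendsto_smul_inv_quadratic_smul_sub a (-b) (L * ρ * Lᴴ) (-B) ρ
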